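/- arXiv:1611.09666 — 5 statements merged into one kernel-verified Lean document; each statement's English description precedes it below -/
import Mathlib

section
/- Let V be a finite type, α a type with a relation r that is transitive and irreflexive, s : V with T s = s, T : V → V, and ω : V → α such that r (ω (T v)) (ω v) holds for every v ≠ s. For each v : V let N be the least natural number with T^[N] v = s (which exists). Then the nodes T^[0] v, T^[1] v, …, T^[N] v are pairwise distinct; hence the parent chain from every target v back to the source s is a simple path, so the source has a unique parent-chain path to every target. -/
/-- On a finite type with costs strictly improving along the
parent map at every non-source node, for each node `v` the least `N` with
`T^[N] v = s` exists and the nodes `T^[0] v, …, T^[N] v` are pairwise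
distinct: the parent chain to the source is a simple (unique) path. -/
theorem parent_chain_is_simple_path
    {V α : Type*} [Fintype V] (r : α → α → Prop)
    (htrans : ∀ a b c, r a b → r b c → r a c)
    (hirrefl : ∀ a, ¬ r a a)
    (T : V → V) (s : V) (hs : T s = s) (ω : V → α)
    (hstep : ∀ v : V, v ≠ s → r (ω (T v)) (ω v)) :
    ∀ v : V, ∃ N : ℕ, T^[N] v = s ∧ (∀ k : ℕ, T^[k] v = s → N ≤ k) ∧
      ∀ i ≤ N, ∀ j ≤ N, i ≠ j → T^[i] v ≠ T^[j] v := by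
  intro v
  classical
  -- chain lemma: strictly decreasing cost along the chain while away from s
  have chain : ∀ i j : ℕ, i < j → (∀ k, k < j → T^[k] v ≠ s) →
      r (ω (T^[j] v)) (ω (T^[i] v)) := by
    intro i j
    induction j with
    | zero => omega
    | succ j ih =>
      intro hij hk
      have hstep' : r (ω (T^[j+1] v)) (ω (T^[j] v)) := by
        rw [Function.iterate_succ_apply']
        exact hstep (T^[j] v) (hk j (Nat.lt_succ_self j))
      rcases Nat.lt_succ_iff_lt_or_eq.mp hij with h | h
      · exact htrans _ _ _ hstep' (ih h (fun k hk' => hk k (Nat.lt_succ_of_lt hk')))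
      · rw [h]; exact hstep'
  -- existence of some n with T^[n] v = s
  have hex : ∃ n : ℕ, T^[n] v = s := by
    by_contra hcon
    push_neg at hcon
    obtain ⟨a, b, hne, hab⟩ := Finite.exists_ne_map_eq_of_infinite (fun n : ℕ => T^[n] v)
    rcases hne.lt_or_gt with h | h
    · exact hirrefl _ (by
        have := chain a b h (fun k _ => hcon k)
        rwa [hab] at this)
    · exact hirrefl _ (by
        have := chain b a h (fun k _ => hcon k)
        rwa [hab] at this)
  refine ⟨Nat.find hex, Nat.find_spec hex, fun k hk => Nat.find_le hk, ?_⟩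
  have hmin : ∀ k, k < Nat.find hex → T^[k] v ≠ s := fun k hk => Nat.find_min hex hk
  -- distinctness, first for i < j
  have key : ∀ i j, i < j → j ≤ Nat.find hex → T^[i] v ≠ T^[j] v := by
    intro i j hij hj heq
    rcases eq_or_lt_of_le hj with h | h
    · subst h
      exact hmin i hij (heq.trans (Nat.find_spec hex))
    · have := chain i j hij (fun k hk => hmin k (hk.trans h))
      rw [heq] at this
      exact hirrefl _ this
  intro i hi j hj hne
  rcases hne.lt_or_gt with h | h
  · exact key i j h hj
  · exact fun heq => key j i h hi heq.symm
end

section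
/- Let G be a simple graph on a finite vertex type V with symmetric nonnegative edge weights w, let s : V, and let ω : V → ℝ with ω s = 0. Suppose T : V → V satisfies T s = s, and for every v ≠ s: T v is adjacent to v in G and ω v = ω (T v) + w (T v) v, and for every v there exists n with T^[n] v = s. Then for every vertex v there exists a walk p from s to v in G with weight p = ω v; that is, each recorded cost ω v is realized as the weight of an actual path from the source along the tree stored in T. -/
/-- The weight of a walk: the sum of `w` over its consecutive vertex pairs. -/
def walkWeight {V : Type*} {G : SimpleGraph V} (w : V → V → ℝ)
    {s t : V} (p : G.Walk s t) : ℝ :=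
  (p.darts.map fun d => w d.toProd.1 d.toProd.2).sum

/-- If the parent map `T` realizes the costs `ω` (each non-source
node `v` is adjacent to its parent with `ω v = ω (T v) + w (T v) v`) and every
parent chain reaches the source, then each cost `ω v` is realized as the
weight of an actual walk from the source to `v`. -/
theorem cost_realized_by_tree_walk
    {V : Type*} [Fintype V] (G : SimpleGraph V) (w : V → V → ℝ)
    (hsymm : ∀ u v, w u v = w v u)
    (hnonneg : ∀ u v, 0 ≤ w u v)
    (s : V) (ω : V → ℝ) (hωs : ω s = 0)
    (T : V → V) (hTs : T s = s)
    (hadj : ∀ v : V, v ≠ s → G.Adj (T v) v)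
    (hcost : ∀ v : V, v ≠ s → ω v = ω (T v) + w (T v) v)
    (hreach : ∀ v : V, ∃ n : ℕ, T^[n] v = s) :
    ∀ v : V, ∃ p : G.Walk s v, walkWeight w p = ω v := by
  have key : ∀ n : ℕ, ∀ v : V, T^[n] v = s → ∃ p : G.Walk s v, walkWeight w p = ω v := by
    intro n
    induction n with
    | zero =>
      intro v hv
      simp only [Function.iterate_zero, id_eq] at hv
      subst hv
      exact ⟨SimpleGraph.Walk.nil, by simp [walkWeight, hωs]⟩
    | succ n ih =>
      intro v hv
      by_cases hvs : v = s
      · subst hvs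
        exact ⟨SimpleGraph.Walk.nil, by simp [walkWeight, hωs]⟩
      · rw [Function.iterate_succ_apply] at hv
        obtain ⟨p, hp⟩ := ih (T v) hv
        refine ⟨p.concat (hadj v hvs), ?_⟩
        have : walkWeight w (p.concat (hadj v hvs)) = walkWeight w p + w (T v) v := by
          simp [walkWeight, SimpleGraph.Walk.darts_concat]
        rw [this, hp, hcost v hvs]
  intro v
  obtain ⟨n, hn⟩ := hreach v
  exact key n v hn
end

section
/- Let G be a simple graph on a finite vertex type V with symmetric nonnegative edge weights w, let s : V, and let ω : V → ℝ with ω s = 0. Suppose (i) stability: for every pair of adjacent vertices u, v, ω v ≤ ω u + w u v; and (ii) tree realization: there is T : V → V with T s = s such that for every v ≠ s, T v is adjacent to v and ω v = ω (T v) + w (T v) v, and for every v there exists n with T^[n] v = s. Then for every vertex v, ω v is the least element of the set of weights of walks from s to v in G: ω v lies in this set and ω v ≤ weight p for every walk p from s to v. In other words, when the optimizing program halts, the cost on every target is the exact optimal (shortest-path) value. -/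
/-- Under stability and tree realization, when the optimizing
program halts the cost `ω v` on every target is the exact optimal value: it
is attained by a walk from `s` to `v` and is a lower bound for the weight of
every walk from `s` to `v`. -/
theorem halted_cost_is_optimal
    {V : Type*} [Fintype V] (G : SimpleGraph V) (w : V → V → ℝ)
    (hsymm : ∀ u v, w u v = w v u)
    (hnonneg : ∀ u v, 0 ≤ w u v)
    (s : V) (ω : V → ℝ) (hωs : ω s = 0)
    (hstable : ∀ u v, G.Adj u v → ω v ≤ ω u + w u v)
    (T : V → V) (hTs : T s = s)
    (hadj : ∀ v : V, v ≠ s → G.Adj (T v) v)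
    (hcost : ∀ v : V, v ≠ s → ω v = ω (T v) + w (T v) v)
    (hreach : ∀ v : V, ∃ n : ℕ, T^[n] v = s) :
    ∀ v : V, (∃ p : G.Walk s v, walkWeight w p = ω v) ∧
      ∀ p : G.Walk s v, ω v ≤ walkWeight w p := by
  have lb : ∀ (u v : V) (p : G.Walk u v), ω v ≤ ω u + walkWeight w p := by
    intro u v p
    induction p with
    | nil => simp [walkWeight]
    | cons h q ih =>
      rename_i a b c
      simp only [walkWeight, SimpleGraph.Walk.darts_cons, List.map_cons, List.sum_cons]
      calc ω c ≤ ω b + walkWeight w q := ih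
        _ ≤ (ω a + w a b) + walkWeight w q := by
            linarith [hstable a b h]
        _ = ω a + (w a b + walkWeight w q) := by ring
  have ex : ∀ (n : ℕ) (v : V), T^[n] v = s → ∃ p : G.Walk s v, walkWeight w p = ω v := by
    intro n
    induction n with
    | zero =>
      intro v hv
      simp only [Function.iterate_zero, id] at hv
      subst hv
      exact ⟨SimpleGraph.Walk.nil, by simp [walkWeight, hωs]⟩
    | succ n ih =>
      intro v hv
      by_cases hvs : v = s
      · subst hvs
        exact ⟨SimpleGraph.Walk.nil, by simp [walkWeight, hωs]⟩
      · have h1 : T^[n] (T v) = s := by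
          rw [← Function.iterate_succ_apply]
          exact hv
        obtain ⟨p, hp⟩ := ih (T v) h1
        refine ⟨p.concat (hadj v hvs), ?_⟩
        simp only [walkWeight, SimpleGraph.Walk.darts_concat, List.concat_eq_append, List.map_append,
          List.sum_append, List.map_cons, List.map_nil, List.sum_cons, List.sum_nil]
        rw [hcost v hvs]
        simp [walkWeight] at hp
        rw [hp]
        ring
  intro v
  obtain ⟨n, hn⟩ := hreach v
  refine ⟨ex n v hn, fun p => ?_⟩
  have := lb s v p
  linarith [lb s v p]
end

section
/- Multiple-source version: let G be a simple graph on a finite vertex type V with symmetric nonnegative edge weights w, let S ⊆ V be a nonempty set of sources, and let ω : V → ℝ with ω s = 0 for every s ∈ S. Suppose (i) stability: for every pair of adjacent vertices u, v, ω v ≤ ω u + w u v; and (ii) forest realization: there is T : V → V with T s = s for each s ∈ S, such that for every v ∉ S, T v is adjacent to v and ω v = ω (T v) + w (T v) v, and for every v there exists n with T^[n] v ∈ S. Then for every vertex v, ω v is the least element of the set {x : ℝ | ∃ s ∈ S, ∃ walk p from s to v in G, weight p = x}; that is, ω v is the optimal cost to v over all sources. -/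
/-- Multiple-source version. Under stability and forest
realization over a nonempty source set `S`, for every vertex `v` the cost
`ω v` is the least element of the set of weights of walks from some source
in `S` to `v`. -/
theorem halted_cost_is_optimal_multisource
    {V : Type*} [Fintype V] (G : SimpleGraph V) (w : V → V → ℝ)
    (hsymm : ∀ u v, w u v = w v u)
    (hnonneg : ∀ u v, 0 ≤ w u v)
    (S : Set V) (hS : S.Nonempty) (ω : V → ℝ)
    (hωS : ∀ s ∈ S, ω s = 0)
    (hstable : ∀ u v, G.Adj u v → ω v ≤ ω u + w u v)
    (T : V → V) (hTS : ∀ s ∈ S, T s = s)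
    (hadj : ∀ v : V, v ∉ S → G.Adj (T v) v)
    (hcost : ∀ v : V, v ∉ S → ω v = ω (T v) + w (T v) v)
    (hreach : ∀ v : V, ∃ n : ℕ, T^[n] v ∈ S) :
    ∀ v : V, ω v ∈ {x : ℝ | ∃ s ∈ S, ∃ p : G.Walk s v, walkWeight w p = x} ∧
      ∀ x ∈ {x : ℝ | ∃ s ∈ S, ∃ p : G.Walk s v, walkWeight w p = x}, ω v ≤ x := by

  -- lower bound lemma
  have lower : ∀ {s v : V} (p : G.Walk s v), ω v ≤ ω s + walkWeight w p := by
    intro s v p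
    induction p with
    | nil => simp [walkWeight]
    | cons h q ih =>
      rename_i a b c
      have : walkWeight w (SimpleGraph.Walk.cons h q) = w a b + walkWeight w q := by
        simp [walkWeight]
      rw [this]
      calc ω c ≤ ω b + walkWeight w q := ih
        _ ≤ (ω a + w a b) + walkWeight w q := by
            have := hstable a b h; linarith
        _ = ω a + (w a b + walkWeight w q) := by ring
  -- existence
  have exist : ∀ (n : ℕ) (v : V), T^[n] v ∈ S →
      ∃ s ∈ S, ∃ p : G.Walk s v, walkWeight w p = ω v := by
    intro n
    induction n with
    | zero =>
      intro v hv
      exact ⟨v, hv, SimpleGraph.Walk.nil, by simp [walkWeight, hωS v hv]⟩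
    | succ n ih =>
      intro v hv
      by_cases hvS : v ∈ S
      · exact ⟨v, hvS, SimpleGraph.Walk.nil, by simp [walkWeight, hωS v hvS]⟩
      · have h1 : T^[n] (T v) ∈ S := by
          rwa [← Function.iterate_succ_apply]
        obtain ⟨s, hs, p, hp⟩ := ih (T v) h1
        refine ⟨s, hs, p.append (SimpleGraph.Walk.cons (hadj v hvS) SimpleGraph.Walk.nil), ?_⟩
        have : walkWeight w (p.append (SimpleGraph.Walk.cons (hadj v hvS) SimpleGraph.Walk.nil))
            = walkWeight w p + w (T v) v := by
          simp [walkWeight, SimpleGraph.Walk.darts_append]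
        rw [this, hp, ← hcost v hvS]
  intro v
  obtain ⟨n, hn⟩ := hreach v
  refine ⟨exist n v hn, ?_⟩
  rintro x ⟨s, hs, p, rfl⟩
  have := lower p
  rw [hωS s hs] at this
  linarith
end

section
/- Let G be a connected simple graph on a finite vertex type V with symmetric nonnegative edge weights w, and let s : V. For each vertex u, let m u denote the minimum of weight p over all walks p from s to u whose length equals the hop distance G.dist s u (this minimum exists). Then for every v ≠ s, the set U = {u | u is adjacent to v and G.dist s u + 1 = G.dist s v} is nonempty and m v = min over u ∈ U of (m u + w u v). (This is the layered recurrence computed by the Hybrid Dijkstra Algorithm: the optimal cost among hop-minimal paths to v is obtained from the upstream neighbors one region higher in the hierarchy.) -/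
open scoped Classical

lemma walkWeight_concat {V : Type*} {G : SimpleGraph V} (w : V → V → ℝ)
    {s u v : V} (p : G.Walk s u) (h : G.Adj u v) :
    walkWeight w (p.concat h) = walkWeight w p + w u v := by
  simp [walkWeight, SimpleGraph.Walk.darts_concat, List.concat_eq_append]

/-- Layered recurrence of the Hybrid Dijkstra Algorithm. If
`m u` is the minimum weight over the hop-minimal walks from `s` to `u`
(walks whose length equals the hop distance `G.dist s u`), then for every
`v ≠ s` the set `U` of upstream neighbors (one region higher) is nonempty
and `m v = min_{u ∈ U} (m u + w u v)`. -/
theorem layered_recurrence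
    {V : Type*} [Fintype V] (G : SimpleGraph V) (hconn : G.Connected)
    (w : V → V → ℝ)
    (hsymm : ∀ u v, w u v = w v u)
    (hnonneg : ∀ u v, 0 ≤ w u v)
    (s : V) (m : V → ℝ)
    (hmin : ∀ u : V, ∃ p : G.Walk s u, p.length = G.dist s u ∧ walkWeight w p = m u)
    (hlb : ∀ u : V, ∀ p : G.Walk s u, p.length = G.dist s u → m u ≤ walkWeight w p) :
    ∀ v : V, v ≠ s →
      ∃ hne : (Finset.univ.filter fun u => G.Adj u v ∧ G.dist s u + 1 = G.dist s v).Nonempty,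
        m v = (Finset.univ.filter fun u => G.Adj u v ∧ G.dist s u + 1 = G.dist s v).inf' hne
          (fun u => m u + w u v) := by
  intro v hv
  have hdpos : 0 < G.dist s v := hconn.pos_dist_of_ne (Ne.symm hv)
  obtain ⟨p, hp, hpw⟩ := hmin v
  have hppos : 0 < p.length := hp ▸ hdpos
  -- decompose p as q.concat h
  obtain ⟨u, q, h, hpe⟩ : ∃ (u : V) (q : G.Walk s u) (h : G.Adj u v), p = q.concat h := by
    cases p with
    | nil => simp at hppos
    | cons h' p' =>
      obtain ⟨x, q, h'', hc⟩ := SimpleGraph.Walk.exists_cons_eq_concat h' p'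
      exact ⟨x, q, h'', hc⟩
  have hql : q.length + 1 = p.length := by rw [hpe]; simp
  -- dist s u = q.length
  have hdu_le : G.dist s u ≤ q.length := SimpleGraph.dist_le q
  have hdv_le : G.dist s v ≤ G.dist s u + 1 := by
    obtain ⟨r, hr, _⟩ := hmin u
    have := SimpleGraph.dist_le (r.concat h)
    simpa [hr] using this
  have hdu : G.dist s u + 1 = G.dist s v := by omega
  have hqd : q.length = G.dist s u := by omega
  have humem : u ∈ Finset.univ.filter fun u => G.Adj u v ∧ G.dist s u + 1 = G.dist s v := by
    simp [h, hdu]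
  refine ⟨⟨u, humem⟩, le_antisymm ?_ ?_⟩
  · -- m v ≤ inf'
    apply Finset.le_inf'
    intro b hb
    simp only [Finset.mem_filter, Finset.mem_univ, true_and] at hb
    obtain ⟨hadj, hbd⟩ := hb
    obtain ⟨r, hr, hrw⟩ := hmin b
    have hlen : (r.concat hadj).length = G.dist s v := by simp [hr, hbd]
    have := hlb v (r.concat hadj) hlen
    rwa [walkWeight_concat, hrw] at this
  · -- inf' ≤ m v
    refine Finset.inf'_le_of_le _ humem ?_
    have hmu : m u ≤ walkWeight w q := hlb u q hqd
    have : walkWeight w p = walkWeight w q + w u v := by rw [hpe, walkWeight_concat]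
    rw [← hpw, this]
    linarith
end
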